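/- Let Ψ ⊂ A be a compact set invariant under a homeomorphism H : Ψ → Ψ that is uniformly rigid, and suppose the lift Ψ̃ = q⁻¹(Ψ) is connected. Then for every ε > 0 there exist N > 0 and a real number α_ε such that for every n ≥ N and every y ∈ Ψ̃, |(π̃₁(H̃^n(y)) − π̃₁(y))/n − α_ε| < ε. Consequently, the rotation number α = lim_{n→∞}(π̃₁(H̃^n(y)) − π̃₁(y))/n exists, is the same for all y ∈ Ψ̃, and the convergence is uniform. -/

import Mathlib

/-!
The displacement `π̃₁(H̃ᵐ y) − π̃₁ y` is the Birkhoff sum of `g y = π̃₁(H̃ y) − π̃₁ y`, which is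
bounded on `Ψ̃` since it is continuous and invariant under the deck translation. Rigidity gives
iterates `H̃ᵏ` whose displacement is within `δ < 1/2` of an integer at every point; as the
displacement is continuous and `Ψ̃` is connected, this integer `j` does not depend on the point.
Cutting an orbit segment of length `m` into blocks of length `k` then puts the average displacement
within `δ + O(1/m)` of `j / k`, uniformly in `y`, and these approximations converge to the rotation
number.
-/

open Set Filter Topology

section Birkhoff

variable {X : Type*} {f : X → X} {S : Set X} {g : X → ℝ}

theorem birkhoffSum_comp_sub (f : X → X) (φ : X → ℝ) (n : ℕ) (x : X) :
    birkhoffSum f (fun y => φ (f y) - φ y) n x = φ (f^[n] x) - φ x := by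
  induction n with
  | zero => simp
  | succ n ih => rw [birkhoffSum_succ, ih, Function.iterate_succ_apply']; ring

theorem abs_birkhoffSum_le (hf : MapsTo f S S) {C : ℝ} (hC : ∀ y ∈ S, |g y| ≤ C) (r : ℕ)
    {x : X} (hx : x ∈ S) : |birkhoffSum f g r x| ≤ r * C := by
  induction r with
  | zero => simp
  | succ r ih =>
    rw [birkhoffSum_succ]
    push_cast
    linarith [abs_add_le (birkhoffSum f g r x) (g (f^[r] x)), hC _ (hf.iterate r hx)]

theorem abs_birkhoffSum_mul_sub_le (hf : MapsTo f S S) {k : ℕ} {c δ : ℝ}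
    (hkc : ∀ y ∈ S, |birkhoffSum f g k y - c| ≤ δ) (q : ℕ) {x : X} (hx : x ∈ S) :
    |birkhoffSum f g (q * k) x - q * c| ≤ q * δ := by
  induction q with
  | zero => simp
  | succ q ih =>
    rw [Nat.succ_mul, birkhoffSum_add]
    have hsplit := abs_add_le (birkhoffSum f g (q * k) x - q * c)
      (birkhoffSum f g k (f^[q * k] x) - c)
    rw [sub_add_sub_comm, ← add_one_mul] at hsplit
    push_cast
    linarith [hkc _ (hf.iterate (q * k) hx)]

theorem abs_birkhoffAverage_sub_le (hf : MapsTo f S S) {C : ℝ} (hC : ∀ y ∈ S, |g y| ≤ C)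
    {k : ℕ} (hk : 0 < k) {c δ : ℝ} (hkc : ∀ y ∈ S, |birkhoffSum f g k y - c| ≤ δ) {m : ℕ}
    (hm : 0 < m) {x : X} (hx : x ∈ S) :
    |birkhoffAverage ℝ f g m x - c / k| ≤ δ / k + (k * C + |c|) / m := by
  have hC0 : 0 ≤ C := (abs_nonneg _).trans (hC x hx)
  have hδ0 : 0 ≤ δ := (abs_nonneg _).trans (hkc x hx)
  obtain ⟨q, r, hrk, rfl⟩ : ∃ q r, r < k ∧ m = q * k + r :=
    ⟨m / k, m % k, Nat.mod_lt _ hk, (Nat.div_add_mod' m k).symm⟩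
  have hk' : (0 : ℝ) < k := Nat.cast_pos.mpr hk
  have hm' : (0 : ℝ) < (q * k + r : ℕ) := Nat.cast_pos.mpr hm
  have hrk' : (r : ℝ) ≤ k := by exact_mod_cast hrk.le
  have hblocks := abs_birkhoffSum_mul_sub_le hf hkc q hx
  have htail := abs_birkhoffSum_le hf hC r (hf.iterate (q * k) hx)
  have hrc : |r * c / k| ≤ |c| := by
    rw [abs_div, abs_mul, Nat.abs_cast, Nat.abs_cast, div_le_iff₀ hk', mul_comm]
    exact mul_le_mul_of_nonneg_left hrk' (abs_nonneg c)
  have hsum : |birkhoffSum f g (q * k + r) x - (q * k + r : ℕ) * c / k|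
      ≤ q * δ + (k * C + |c|) := by
    rw [birkhoffSum_add]
    calc _ = |(birkhoffSum f g (q * k) x - q * c) + birkhoffSum f g r (f^[q * k] x)
          - r * c / k| := by push_cast; field_simp; ring_nf
      _ ≤ q * δ + r * C + |c| := by
          linarith [abs_sub (birkhoffSum f g (q * k) x - q * c + birkhoffSum f g r (f^[q * k] x))
            (r * c / k), abs_add_le (birkhoffSum f g (q * k) x - q * c)
            (birkhoffSum f g r (f^[q * k] x))]
      _ ≤ q * δ + (k * C + |c|) := by linarith [mul_le_mul_of_nonneg_right hrk' hC0]
  have havg : birkhoffAverage ℝ f g (q * k + r) x - c / k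
      = (birkhoffSum f g (q * k + r) x - (q * k + r : ℕ) * c / k) / (q * k + r : ℕ) := by
    rw [birkhoffAverage, smul_eq_mul]
    field_simp
  have hblocks_avg : (q : ℝ) * δ / (q * k + r : ℕ) ≤ δ / k := by
    rw [div_le_div_iff₀ hm' hk']
    push_cast
    nlinarith [mul_nonneg hδ0 (Nat.cast_nonneg (α := ℝ) r)]
  calc |birkhoffAverage ℝ f g (q * k + r) x - c / k|
      ≤ (q * δ + (k * C + |c|)) / (q * k + r : ℕ) := by
        rw [havg, abs_div, abs_of_pos hm']
        gcongr
    _ ≤ δ / k + (k * C + |c|) / (q * k + r : ℕ) := by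
        rw [add_div]
        gcongr

theorem exists_tendstoUniformlyOn_const_of_approx {u : ℕ → X → ℝ} (hS : S.Nonempty)
    (h : ∀ ε > 0, ∃ a : ℝ, ∀ᶠ m in atTop, ∀ y ∈ S, |u m y - a| < ε) :
    ∃ α : ℝ, TendstoUniformlyOn u (fun _ => α) atTop S := by
  obtain ⟨y₀, hy₀⟩ := hS
  have hcauchy : CauchySeq (u · y₀) := by
    refine Metric.cauchySeq_iff.mpr fun ε hε => ?_
    obtain ⟨a, ha⟩ := h (ε / 2) (half_pos hε)
    obtain ⟨N, hN⟩ := eventually_atTop.mp ha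
    refine ⟨N, fun m hm n hn => ?_⟩
    rw [Real.dist_eq]
    linarith [abs_sub_le (u m y₀) a (u n y₀), abs_sub_comm a (u n y₀), hN m hm y₀ hy₀,
      hN n hn y₀ hy₀]
  obtain ⟨α, hα⟩ := cauchySeq_tendsto_of_complete hcauchy
  refine ⟨α, Metric.tendstoUniformlyOn_iff.mpr fun ε hε => ?_⟩
  obtain ⟨a, ha⟩ := h (ε / 2) (half_pos hε)
  have hαa : |α - a| ≤ ε / 2 :=
    le_of_tendsto (hα.sub_const a).abs (ha.mono fun m hm => (hm y₀ hy₀).le)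
  filter_upwards [ha] with m hm y hy
  rw [dist_comm, Real.dist_eq]
  linarith [abs_sub_le (u m y) a α, abs_sub_comm a α, hm y hy]

theorem exists_tendstoUniformlyOn_birkhoffAverage (hS : S.Nonempty) (hf : MapsTo f S S) {C : ℝ}
    (hC : ∀ y ∈ S, |g y| ≤ C)
    (happrox : ∀ δ > 0, ∃ k > 0, ∃ c : ℝ, ∀ y ∈ S, |birkhoffSum f g k y - c| ≤ δ) :
    ∃ α : ℝ, TendstoUniformlyOn (birkhoffAverage ℝ f g) (fun _ => α) atTop S := by
  refine exists_tendstoUniformlyOn_const_of_approx hS fun ε hε => ?_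
  obtain ⟨k, hk, c, hkc⟩ := happrox (ε / 2) (half_pos hε)
  refine ⟨c / k, ?_⟩
  have hsmall : ∀ᶠ m : ℕ in atTop, (k * C + |c|) / m < ε / 2 :=
    (tendsto_const_div_atTop_nhds_zero_nat _).eventually (gt_mem_nhds (half_pos hε))
  have hk1 : ε / 2 / k ≤ ε / 2 := div_le_self (half_pos hε).le (Nat.one_le_cast.mpr hk)
  filter_upwards [hsmall, eventually_gt_atTop 0] with m hm hm0 y hy
  linarith [abs_birkhoffAverage_sub_le hf hC hk hkc hm0 hy]

end Birkhoff

theorem round_eq_of_abs_sub_lt_half {x : ℝ} {j : ℤ} (h : |x - j| < 1 / 2) : round x = j := by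
  rw [round_eq_iff]
  constructor <;> linarith [abs_lt.mp h]

theorem continuousAt_round_of_abs_sub_lt_half {x : ℝ} {j : ℤ} (h : |x - j| < 1 / 2) :
    ContinuousAt round x := by
  have hnear : ∀ᶠ y in 𝓝 x, |y - (j : ℝ)| < 1 / 2 :=
    (isOpen_lt (continuous_sub_right _).abs continuous_const).mem_nhds h
  exact continuousAt_const.congr (hnear.mono fun _ hy => (round_eq_of_abs_sub_lt_half hy).symm)

theorem IsConnected.exists_int_forall_abs_sub_lt {X : Type*} [TopologicalSpace X] {S : Set X}
    (hS : IsConnected S) {d : X → ℝ} (hd : ContinuousOn d S) {δ : ℝ} (hδ : δ ≤ 1 / 2)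
    (h : ∀ y ∈ S, ∃ j : ℤ, |d y - j| < δ) : ∃ j : ℤ, ∀ y ∈ S, |d y - j| < δ := by
  have hround : ∀ y ∈ S, |d y - round (d y)| < δ := fun y hy => by
    obtain ⟨j, hj⟩ := h y hy
    rwa [round_eq_of_abs_sub_lt_half (hj.trans_le hδ)]
  have hcont : ContinuousOn (fun y => round (d y)) S := fun y hy => by
    obtain ⟨j, hj⟩ := h y hy
    exact (continuousAt_round_of_abs_sub_lt_half (hj.trans_le hδ)).comp_continuousWithinAt
      (hd y hy)
  obtain ⟨y₀, hy₀⟩ := hS.nonempty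
  exact ⟨round (d y₀), fun y hy => hS.isPreconnected.constant hcont hy hy₀ ▸ hround y hy⟩

section Annulus

variable {Ψ : Set (ℝ × ℝ)}

theorem exists_forall_abs_le_of_deck_invariant (hclosed : IsClosed Ψ)
    (hsub : Ψ ⊆ Icc 0 1 ×ˢ univ) (hdeck : ∀ y : ℝ × ℝ, y ∈ Ψ ↔ (y.1, y.2 + 1) ∈ Ψ)
    {g : ℝ × ℝ → ℝ} (hg : ContinuousOn g Ψ) (hper : ∀ y ∈ Ψ, g (y.1, y.2 + 1) = g y) :
    ∃ C, ∀ y ∈ Ψ, |g y| ≤ C := by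
  have hK : IsCompact (Ψ ∩ Icc 0 1 ×ˢ Icc 0 1) :=
    (isCompact_Icc.prod isCompact_Icc).inter_left hclosed
  obtain ⟨C, hC⟩ := hK.exists_bound_of_continuousOn (hg.mono inter_subset_left)
  refine ⟨C, fun y hy => ?_⟩
  -- Membership and the value of `g` are invariant along the fibre through `y` under unit shifts;
  -- as a `1`-periodic predicate, `Periodic.int_mul_eq` extends this to all integer shifts.
  have hperiodic :
      Function.Periodic (fun t : ℝ => (y.1, y.2 + t) ∈ Ψ ∧ g (y.1, y.2 + t) = g y) 1 := by
    intro t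
    set z : ℝ × ℝ := (y.1, y.2 + t)
    dsimp only
    rw [show ((y.1, y.2 + (t + 1)) : ℝ × ℝ) = (z.1, z.2 + 1) by simp [z, add_assoc]]
    exact propext ⟨fun ⟨h1, h2⟩ => ⟨(hdeck z).2 h1, (hper z ((hdeck z).2 h1)).symm.trans h2⟩,
      fun ⟨h1, h2⟩ => ⟨(hdeck z).1 h1, (hper z h1).trans h2⟩⟩
  obtain ⟨hmem, hshift⟩ : (y.1, y.2 + (-⌊y.2⌋ : ℤ)) ∈ Ψ ∧ g (y.1, y.2 + (-⌊y.2⌋ : ℤ)) = g y := by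
    simpa [hy] using hperiodic.int_mul_eq (-⌊y.2⌋)
  rw [← hshift, ← Real.norm_eq_abs]
  refine hC _ ⟨hmem, (hsub hy).1, ?_, ?_⟩ <;> push_cast
  · linarith [Int.floor_le y.2]
  · linarith [Int.lt_floor_add_one y.2]

theorem IsConnected.exists_int_forall_abs_iterate_snd_sub_lt (hconn : IsConnected Ψ)
    {H : ℝ × ℝ → ℝ × ℝ} (hcont : ContinuousOn H Ψ) (hmaps : MapsTo H Ψ Ψ) {k : ℕ} {δ : ℝ}
    (hδ : δ ≤ 1 / 2) (hrigid : ∀ y ∈ Ψ, ∃ j : ℤ, dist (H^[k] y) (y.1, y.2 + j) < δ) :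
    ∃ j : ℤ, ∀ y ∈ Ψ, |(H^[k] y).2 - y.2 - j| < δ := by
  refine hconn.exists_int_forall_abs_sub_lt ((continuous_snd.comp_continuousOn
    (hcont.iterate hmaps k)).sub continuous_snd.continuousOn) hδ fun y hy => ?_
  obtain ⟨j, hj⟩ := hrigid y hy
  refine ⟨j, lt_of_le_of_lt ?_ hj⟩
  show |(H^[k] y).2 - y.2 - j| ≤ _
  rw [Prod.dist_eq, sub_sub, ← Real.dist_eq]
  exact le_max_right _ _

end Annulus

theorem pseudo_suspension_stmt1_general
    (Ψt : Set (ℝ × ℝ))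
    (hsub : Ψt ⊆ Set.Icc (0:ℝ) 1 ×ˢ (Set.univ : Set ℝ))
    (hclosed : IsClosed Ψt)
    (hconn : IsConnected Ψt)
    (hdeck : ∀ y : ℝ × ℝ, y ∈ Ψt ↔ (y.1, y.2 + 1) ∈ Ψt)
    (Ht : ℝ × ℝ → ℝ × ℝ)
    (hcont : ContinuousOn Ht Ψt)
    (hmaps : Set.MapsTo Ht Ψt Ψt)
    (hequiv : ∀ y ∈ Ψt, Ht (y.1, y.2 + 1) = ((Ht y).1, (Ht y).2 + 1))
    (n : ℕ → ℕ) (hpos : ∀ i, 0 < n i)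
    (hrigid : ∀ ε > (0:ℝ), ∃ I : ℕ, ∀ i ≥ I, ∀ y ∈ Ψt,
      ∃ j : ℤ, dist (Ht^[n i] y) (y.1, y.2 + (j : ℝ)) < ε) :
    (∀ ε > (0:ℝ), ∃ N : ℕ, 0 < N ∧ ∃ αε : ℝ, ∀ m ≥ N, ∀ y ∈ Ψt,
        |((Ht^[m] y).2 - y.2) / (m : ℝ) - αε| < ε) ∧
    ∃ α : ℝ, ∀ y ∈ Ψt,
      Filter.Tendsto (fun m : ℕ => ((Ht^[m] y).2 - y.2) / (m : ℝ))
        Filter.atTop (nhds α) := by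
  set g : ℝ × ℝ → ℝ := fun y => (Ht y).2 - y.2 with hg
  have hdisp (m : ℕ) (y : ℝ × ℝ) : ((Ht^[m] y).2 - y.2) / m = birkhoffAverage ℝ Ht g m y := by
    rw [birkhoffAverage, hg, birkhoffSum_comp_sub Ht Prod.snd, smul_eq_mul, div_eq_inv_mul]
  obtain ⟨C, hC⟩ : ∃ C, ∀ y ∈ Ψt, |g y| ≤ C :=
    exists_forall_abs_le_of_deck_invariant hclosed hsub hdeck
      ((continuous_snd.comp_continuousOn hcont).sub continuous_snd.continuousOn)
      fun y hy => by simp only [hg, hequiv y hy]; ring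
  have happrox : ∀ δ > 0, ∃ k > 0, ∃ c : ℝ, ∀ y ∈ Ψt, |birkhoffSum Ht g k y - c| ≤ δ := by
    intro δ hδ
    obtain ⟨I, hI⟩ := hrigid (min δ (1 / 2)) (lt_min hδ one_half_pos)
    obtain ⟨j, hj⟩ := hconn.exists_int_forall_abs_iterate_snd_sub_lt hcont hmaps
      (min_le_right _ _) (hI I le_rfl)
    refine ⟨n I, hpos I, j, fun y hy => ?_⟩
    rw [hg, birkhoffSum_comp_sub Ht Prod.snd]
    exact (hj y hy).le.trans (min_le_left _ _)
  obtain ⟨α, hα⟩ := exists_tendstoUniformlyOn_birkhoffAverage hconn.nonempty hmaps hC happrox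
  simp only [hdisp]
  refine ⟨fun ε hε => ?_, α, fun y hy => hα.tendsto_at hy⟩
  obtain ⟨N, hN⟩ := eventually_atTop.mp (Metric.tendstoUniformlyOn_iff.mp hα ε hε)
  refine ⟨N + 1, N.succ_pos, α, fun m hm y hy => ?_⟩
  rw [← Real.dist_eq, dist_comm]
  exact hN m (by omega) y hy

/-- Theorem 2.4: If `(Ψ, H)` is uniformly rigid and the lift `Ψ̃` is connected,
then for every `ε > 0` there are `N > 0` and `α_ε ∈ ℝ` such that for every `n ≥ N` and every
`y ∈ Ψ̃`, `|(π̃₁(H̃^n y) − π̃₁ y)/n − α_ε| < ε`.  Consequently the rotation number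
`α = lim (π̃₁(H̃^n y) − π̃₁ y)/n` exists, is the same for all `y ∈ Ψ̃`, and the convergence is
uniform.  Setting as in Statement 0: everything is modelled in the universal cover. -/
theorem pseudo_suspension_stmt1
    (Ψt : Set (ℝ × ℝ))
    (hsub : Ψt ⊆ Set.Icc (0:ℝ) 1 ×ˢ (Set.univ : Set ℝ))
    (hclosed : IsClosed Ψt)
    (hne : Ψt.Nonempty)
    (hconn : IsConnected Ψt)
    (hdeck : ∀ y : ℝ × ℝ, y ∈ Ψt ↔ (y.1, y.2 + 1) ∈ Ψt)
    (Ht : ℝ × ℝ → ℝ × ℝ)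
    (hcont : ContinuousOn Ht Ψt)
    (hmaps : Set.MapsTo Ht Ψt Ψt)
    (hbij : Set.BijOn Ht Ψt Ψt)
    (hequiv : ∀ y ∈ Ψt, Ht (y.1, y.2 + 1) = ((Ht y).1, (Ht y).2 + 1))
    (n : ℕ → ℕ) (hmono : StrictMono n) (hpos : ∀ i, 0 < n i)
    (hrigid : ∀ ε > (0:ℝ), ∃ I : ℕ, ∀ i ≥ I, ∀ y ∈ Ψt,
      ∃ j : ℤ, dist (Ht^[n i] y) (y.1, y.2 + (j : ℝ)) < ε) :
    (∀ ε > (0:ℝ), ∃ N : ℕ, 0 < N ∧ ∃ αε : ℝ, ∀ m ≥ N, ∀ y ∈ Ψt,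
        |((Ht^[m] y).2 - y.2) / (m : ℝ) - αε| < ε) ∧
    ∃ α : ℝ, ∀ y ∈ Ψt,
      Filter.Tendsto (fun m : ℕ => ((Ht^[m] y).2 - y.2) / (m : ℝ))
        Filter.atTop (nhds α) :=
  pseudo_suspension_stmt1_general Ψt hsub hclosed hconn hdeck Ht hcont hmaps hequiv n hpos hrigid
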